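/- On ℝ^{2n} with canonical Poisson bracket, let V(q) be translation-invariant and homogeneous of degree −2 (e.g. V = Σ_k (q_{k+1}−q_k)^{-2} U_k of the homogeneous differences). Set H̃ = Σ p_i² + V, H̃₁ = Σ p_i, C̃ = (Σ p_i q_i)² − (Σ q_i²)H̃, and H̃₃ = {H̃₁, C̃}. Then {H̃₁, H̃} = 0, {H̃₁, H̃₃} = 2H̃₁² − 6H̃ (for n = 3), {H̃, H̃₃} = 0, and {H̃₃, C̃} = 4 H̃₁ C̃. -/

import Mathlib

set_option maxHeartbeats 1600000
noncomputable section

/-- Canonical Poisson bracket on ℝ⁶ = {(q,p)}, q,p ∈ ℝ³. -/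
def pbr (f g : (Fin 3 → ℝ) × (Fin 3 → ℝ) → ℝ)
    (z : (Fin 3 → ℝ) × (Fin 3 → ℝ)) : ℝ :=
  ∑ i : Fin 3,
    (fderiv ℝ f z (Pi.single i 1, 0) * fderiv ℝ g z (0, Pi.single i 1)
     - fderiv ℝ f z (0, Pi.single i 1) * fderiv ℝ g z (Pi.single i 1, 0))

open ContinuousLinearMap

private abbrev EE := (Fin 3 → ℝ) × (Fin 3 → ℝ)

private theorem pbr_eq {f g : EE → ℝ} {Lf Lg : EE →L[ℝ] ℝ} {z : EE}
    (hf : HasFDerivAt f Lf z) (hg : HasFDerivAt g Lg z) :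
    pbr f g z = ∑ i : Fin 3,
      (Lf (Pi.single i 1, 0) * Lg (0, Pi.single i 1)
       - Lf (0, Pi.single i 1) * Lg (Pi.single i 1, 0)) := by
  simp only [pbr, hf.fderiv, hg.fderiv]

private theorem aux (V : (Fin 3 → ℝ) → ℝ) (U : Set (Fin 3 → ℝ))
    (hU : IsOpen U) (hV : ContDiffOn ℝ (⊤ : ℕ∞) V U)
    (heuler : ∀ q ∈ U, (∑ i, q i * fderiv ℝ V q (Pi.single i 1)) = -2 * V q)
    (htrans : ∀ q ∈ U, (∑ i, fderiv ℝ V q (Pi.single i 1)) = 0)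
    (z : EE) (hz : z.1 ∈ U) :
    pbr (fun w : EE => ∑ i, w.2 i) (fun w : EE => (∑ i, (w.2 i) ^ 2) + V w.1) z = 0 ∧
    pbr (fun w : EE => ∑ i, w.2 i)
      (pbr (fun w : EE => ∑ i, w.2 i)
        (fun w : EE => (∑ i, w.2 i * w.1 i) ^ 2
          - (∑ i, (w.1 i) ^ 2) * ((∑ i, (w.2 i) ^ 2) + V w.1))) z
      = 2 * (∑ i, z.2 i) ^ 2 - 6 * ((∑ i, (z.2 i) ^ 2) + V z.1) ∧
    pbr (fun w : EE => (∑ i, (w.2 i) ^ 2) + V w.1)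
      (pbr (fun w : EE => ∑ i, w.2 i)
        (fun w : EE => (∑ i, w.2 i * w.1 i) ^ 2
          - (∑ i, (w.1 i) ^ 2) * ((∑ i, (w.2 i) ^ 2) + V w.1))) z = 0 ∧
    pbr (pbr (fun w : EE => ∑ i, w.2 i)
        (fun w : EE => (∑ i, w.2 i * w.1 i) ^ 2
          - (∑ i, (w.1 i) ^ 2) * ((∑ i, (w.2 i) ^ 2) + V w.1)))
      (fun w : EE => (∑ i, w.2 i * w.1 i) ^ 2
          - (∑ i, (w.1 i) ^ 2) * ((∑ i, (w.2 i) ^ 2) + V w.1)) z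
      = 4 * (∑ i, z.2 i) *
        ((∑ i, z.2 i * z.1 i) ^ 2
          - (∑ i, (z.1 i) ^ 2) * ((∑ i, (z.2 i) ^ 2) + V z.1)) := by
  simp only [pow_two]
  -- derivative builders at an arbitrary point with first coord in U
  have hq : ∀ (w : EE) (i : Fin 3),
      HasFDerivAt (fun w : EE => w.1 i) ((proj i).comp (fst ℝ (Fin 3 → ℝ) (Fin 3 → ℝ))) w :=
    fun w i => by exact ((proj i).comp (fst ℝ (Fin 3 → ℝ) (Fin 3 → ℝ))).hasFDerivAt
  have hp : ∀ (w : EE) (i : Fin 3),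
      HasFDerivAt (fun w : EE => w.2 i) ((proj i).comp (snd ℝ (Fin 3 → ℝ) (Fin 3 → ℝ))) w :=
    fun w i => by exact ((proj i).comp (snd ℝ (Fin 3 → ℝ) (Fin 3 → ℝ))).hasFDerivAt
  have hVc : ∀ w : EE, w.1 ∈ U →
      HasFDerivAt (fun w : EE => V w.1) ((fderiv ℝ V w.1).comp (fst ℝ (Fin 3 → ℝ) (Fin 3 → ℝ))) w := by
    intro w hw
    exact (((hV.differentiableOn (by simp)).differentiableAt
      (hU.mem_nhds hw)).hasFDerivAt).comp w hasFDerivAt_fst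
  -- the key identity:  {H₁, C} = 2 Q H − 2 S P  on U × ℝ³
  have key : ∀ w : EE, w.1 ∈ U →
      pbr (fun w : EE => ∑ i, w.2 i)
        (fun w : EE => (∑ i, w.2 i * w.1 i) * (∑ i, w.2 i * w.1 i)
          - (∑ i, w.1 i * w.1 i) * ((∑ i, w.2 i * w.2 i) + V w.1)) w
      = 2 * (∑ i, w.1 i) * ((∑ i, w.2 i * w.2 i) + V w.1)
        - 2 * (∑ i, w.2 i * w.1 i) * (∑ i, w.2 i) := by
    intro w hw
    have hK := HasFDerivAt.fun_sum (fun i (_ : i ∈ Finset.univ) => (hp w i).fun_mul (hp w i))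
    have hR := HasFDerivAt.fun_sum (fun i (_ : i ∈ Finset.univ) => (hq w i).fun_mul (hq w i))
    have hS := HasFDerivAt.fun_sum (fun i (_ : i ∈ Finset.univ) => (hp w i).fun_mul (hq w i))
    have hP := HasFDerivAt.fun_sum (fun i (_ : i ∈ Finset.univ) => hp w i)
    have hC := (hS.fun_mul hS).fun_sub (hR.fun_mul (hK.fun_add (hVc w hw)))
    rw [pbr_eq hP hC]
    have ht := htrans w.1 hw
    simp only [Fin.sum_univ_three] at ht ⊢
    simp [Pi.single_apply, Fin.sum_univ_three]
    ring_nf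
    linear_combination (w.1 0 * w.1 0 + w.1 1 * w.1 1 + w.1 2 * w.1 2) * ht
  -- derivatives at z
  have hK := HasFDerivAt.fun_sum (fun i (_ : i ∈ Finset.univ) => (hp z i).fun_mul (hp z i))
  have hR := HasFDerivAt.fun_sum (fun i (_ : i ∈ Finset.univ) => (hq z i).fun_mul (hq z i))
  have hS := HasFDerivAt.fun_sum (fun i (_ : i ∈ Finset.univ) => (hp z i).fun_mul (hq z i))
  have hP := HasFDerivAt.fun_sum (fun i (_ : i ∈ Finset.univ) => hp z i)
  have hQ := HasFDerivAt.fun_sum (fun i (_ : i ∈ Finset.univ) => hq z i)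
  have hH := hK.fun_add (hVc z hz)
  have hC := (hS.fun_mul hS).fun_sub (hR.fun_mul hH)
  -- G = 2 Q H − 2 S P
  have hG := ((hQ.const_mul (2:ℝ)).fun_mul hH).fun_sub ((hS.const_mul (2:ℝ)).fun_mul hP)
  have hev : (pbr (fun w : EE => ∑ i, w.2 i)
        (fun w : EE => (∑ i, w.2 i * w.1 i) * (∑ i, w.2 i * w.1 i)
          - (∑ i, w.1 i * w.1 i) * ((∑ i, w.2 i * w.2 i) + V w.1)))
      =ᶠ[nhds z] (fun w : EE =>
        2 * (∑ i, w.1 i) * ((∑ i, w.2 i * w.2 i) + V w.1)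
        - 2 * (∑ i, w.2 i * w.1 i) * (∑ i, w.2 i)) := by
    refine Filter.eventuallyEq_of_mem
      ((hU.preimage continuous_fst).mem_nhds hz) (fun w hw => key w hw)
  have hH₃ := hG.congr_of_eventuallyEq hev
  have ht := htrans z.1 hz
  have he := heuler z.1 hz
  simp only [Fin.sum_univ_three] at ht he
  refine ⟨?_, ?_, ?_, ?_⟩
  · rw [pbr_eq hP hH]
    simp [Pi.single_apply, Fin.sum_univ_three]
    linear_combination -ht
  · rw [pbr_eq hP hH₃]
    simp [Pi.single_apply, Fin.sum_univ_three]
    ring_nf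
    linear_combination (-2 * (z.1 0 + z.1 1 + z.1 2)) * ht
  · rw [pbr_eq hH hH₃]
    simp [Pi.single_apply, Fin.sum_univ_three]
    ring_nf
    linear_combination (-2 * (z.2 0 + z.2 1 + z.2 2)) * he
      + (-2 * (z.2 0 * z.1 0 + z.2 1 * z.1 1 + z.2 2 * z.1 2)) * ht
  · rw [pbr_eq hH₃ hC]
    simp [Pi.single_apply, Fin.sum_univ_three]
    ring_nf
    linear_combination (4 * (z.1 0 + z.1 1 + z.1 2) * (z.2 0 * z.1 0 + z.2 1 * z.1 1 + z.2 2 * z.1 2)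
        - 2 * (z.2 0 + z.2 1 + z.2 2) * (z.1 0 * z.1 0 + z.1 1 * z.1 1 + z.1 2 * z.1 2)) * he
      + (-2 * (z.2 0 * z.1 0 + z.2 1 * z.1 1 + z.2 2 * z.1 2)
          * (z.1 0 * z.1 0 + z.1 1 * z.1 1 + z.1 2 * z.1 2)) * ht


/-- For `n = 3` and a translation-invariant potential `V`, homogeneous of degree −2
on an open set `U`, the functions `H̃ = ∑pᵢ² + V`, `H̃₁ = ∑pᵢ`,
`C̃ = (∑pᵢqᵢ)² − (∑qᵢ²)H̃`, `H̃₃ = {H̃₁,C̃}` satisfy the algebra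
`{H̃₁,H̃} = 0`, `{H̃₁,H̃₃} = 2H̃₁² − 6H̃`, `{H̃,H̃₃} = 0`, `{H̃₃,C̃} = 4H̃₁C̃`. -/
theorem algebra_of_integrals (V : (Fin 3 → ℝ) → ℝ) (U : Set (Fin 3 → ℝ))
    (hU : IsOpen U) (hV : ContDiffOn ℝ (⊤ : ℕ∞) V U)
    (heuler : ∀ q ∈ U, (∑ i, q i * fderiv ℝ V q (Pi.single i 1)) = -2 * V q)
    (htrans : ∀ q ∈ U, (∑ i, fderiv ℝ V q (Pi.single i 1)) = 0) :
    let H : (Fin 3 → ℝ) × (Fin 3 → ℝ) → ℝ := fun w => (∑ i, (w.2 i) ^ 2) + V w.1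
    let H₁ : (Fin 3 → ℝ) × (Fin 3 → ℝ) → ℝ := fun w => ∑ i, w.2 i
    let C : (Fin 3 → ℝ) × (Fin 3 → ℝ) → ℝ :=
      fun w => (∑ i, w.2 i * w.1 i) ^ 2 - (∑ i, (w.1 i) ^ 2) * H w
    let H₃ : (Fin 3 → ℝ) × (Fin 3 → ℝ) → ℝ := pbr H₁ C
    ∀ z : (Fin 3 → ℝ) × (Fin 3 → ℝ), z.1 ∈ U →
      pbr H₁ H z = 0 ∧
      pbr H₁ H₃ z = 2 * (H₁ z) ^ 2 - 6 * H z ∧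
      pbr H H₃ z = 0 ∧
      pbr H₃ C z = 4 * H₁ z * C z := by
  intro H H₁ C H₃ z hz
  exact aux V U hU hV heuler htrans z hz
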